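/- Fix an integer d ≥ 4 and λ ∈ ℝ. Let Ψ : ℝ → ℝ be a C² solution of equation (E_λ) with Ψ(t) = O(e^t) as t → −∞. Suppose γ₁, γ₂ : ℝ → ℝ are linearly independent C² solutions of the linearized equation (M_{Ψ,λ}) such that: γ₁(t) − e^t = O(e^{3t}) and γ₁'(t) − e^t = O(e^{3t}) as t → −∞; γ₂ is not identically zero; and for every N > 0, γ₂(t)e^{Nt} → 0 and γ₂'(t)e^{Nt} → 0 as t → +∞. Then the only C² function v : (0,∞) → ℝ satisfying v''(r) + ((d−1)/r)v'(r) − r²v(r) + λv(r) + 3r^{−2}Ψ(log r)²·v(r) = 0 for all r > 0 together with ∫₀^∞ (v(r)² + v'(r)² + r²v(r)²) r^{d−1} dr < ∞ is v ≡ 0. -/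

import Mathlib

/-!
With `r = eᵗ`, the function `γ(t) = eᵗ v(eᵗ)` solves the same linear equation `(M_{Ψ,λ})` as
`γ₁` and `γ₂`, and for any two solutions of `y'' + (d - 4) y' + q y = 0` the Wronskian times
`e^{(d-4)t}` is constant. Finite energy makes `(v² + v'²) r^d` arbitrarily small along sequences
`r → ∞` and `r → 0` (otherwise `1/r` would be integrable there). Against the super-exponential
decay of `γ₂` at `+∞` this forces `W(γ, γ₂) = 0`, and against `γ₁ = O(eᵗ)` at `-∞` it forces
`W(γ₁, γ) = 0`. Linear independence and uniqueness for the ODE give `W(γ₁, γ₂) ≠ 0`, so Cramer's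
rule `W(γ₁, γ₂) γ = W(γ, γ₂) γ₁ + W(γ₁, γ) γ₂` yields `γ = 0`.
-/

open Filter Asymptotics Topology Set MeasureTheory

def wronskian (f f' g g' : ℝ → ℝ) (t : ℝ) : ℝ := f t * g' t - g t * f' t

lemma wronskian_mul_eq (f f' g g' h h' : ℝ → ℝ) (t : ℝ) :
    wronskian f f' g g' t * h t = wronskian h h' g g' t * f t + wronskian f f' h h' t * g t := by
  simp only [wronskian]
  ring

lemma sq_wronskian_le (f f' g g' : ℝ → ℝ) (t : ℝ) :
    wronskian f f' g g' t ^ 2 ≤ (f t ^ 2 + f' t ^ 2) * (g t ^ 2 + g' t ^ 2) := by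
  simp only [wronskian]
  nlinarith [sq_nonneg (f t * g t + f' t * g' t)]

/-- `(f, f')` solves the first-order system of `y'' + B y' + q y = 0`. -/
def IsLinearODESol (B : ℝ) (q f f' : ℝ → ℝ) : Prop :=
  ∀ t, HasDerivAt f (f' t) t ∧ HasDerivAt f' (-(B * f' t + q t * f t)) t

lemma lipschitzWith_companion (B c : ℝ) :
    LipschitzWith (1 + ‖B‖₊ + ‖c‖₊) fun p : ℝ × ℝ => (p.2, -(B * p.2 + c * p.1)) := by
  have hsnd : LipschitzWith 1 (Prod.snd : ℝ × ℝ → ℝ) := LipschitzWith.prod_snd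
  have hfst : LipschitzWith 1 (Prod.fst : ℝ × ℝ → ℝ) := LipschitzWith.prod_fst
  have h := hsnd.prodMk
    ((((lipschitzWith_smul B).comp hsnd).add ((lipschitzWith_smul c).comp hfst)).neg)
  refine h.weaken ?_
  simp only [mul_one]
  exact max_le (by simp [add_assoc]) (by simp [add_assoc])

namespace IsLinearODESol

variable {B : ℝ} {q f f' g g' : ℝ → ℝ}

lemma of_contDiff (hf : ContDiff ℝ 2 f)
    (heq : ∀ t, deriv (deriv f) t + B * deriv f t + q t * f t = 0) :
    IsLinearODESol B q f (deriv f) := fun t =>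
  ⟨(hf.differentiable two_ne_zero t).hasDerivAt,
    (hf.differentiable_deriv_two t).hasDerivAt.congr_deriv (by linarith [heq t])⟩

lemma add_const_mul (hf : IsLinearODESol B q f f') (hg : IsLinearODESol B q g g') (c : ℝ) :
    IsLinearODESol B q (fun t => f t + c * g t) (fun t => f' t + c * g' t) := fun t =>
  ⟨(hf t).1.add ((hg t).1.const_mul c),
    ((hf t).2.add ((hg t).2.const_mul c)).congr_deriv (by ring)⟩

lemma wronskian_mul_exp_eq (hf : IsLinearODESol B q f f') (hg : IsLinearODESol B q g g')
    (t : ℝ) : wronskian f f' g g' t * Real.exp (B * t) = wronskian f f' g g' 0 := by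
  have hderiv : ∀ s, HasDerivAt (fun s => wronskian f f' g g' s * Real.exp (B * s)) 0 s := by
    intro s
    have hexp := ((hasDerivAt_id s).const_mul B).exp
    refine ((((hf s).1.mul (hg s).2).sub ((hg s).1.mul (hf s).2)).mul hexp).congr_deriv ?_
    simp only [id, Pi.sub_apply, Pi.mul_apply]
    ring
  simpa using is_const_of_deriv_eq_zero (fun s => (hderiv s).differentiableAt)
    (fun s => (hderiv s).deriv) t 0

lemma eq_zero (hq : Continuous q) (hf : IsLinearODESol B q f f') {t₀ : ℝ}
    (h₀ : f t₀ = 0) (h₀' : f' t₀ = 0) (t : ℝ) : f t = 0 := by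
  set a := min t t₀ - 1
  set b := max t t₀ + 1
  obtain ⟨M, hM⟩ := (isCompact_Icc (a := a) (b := b)).bddAbove_image hq.nnnorm.continuousOn
  have hlip : ∀ s ∈ Ioo a b, LipschitzOnWith (1 + ‖B‖₊ + M)
      (fun p : ℝ × ℝ => (p.2, -(B * p.2 + q s * p.1))) univ := fun s hs =>
    ((lipschitzWith_companion B (q s)).weaken
      (by gcongr; exact hM ⟨s, Ioo_subset_Icc_self hs, rfl⟩)).lipschitzOnWith
  have hsol := ODE_solution_unique_of_mem_Ioo (f := fun s => (f s, f' s)) (g := fun _ => 0) hlip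
    (t₀ := t₀) ⟨by linarith [min_le_right t t₀], by linarith [le_max_right t t₀]⟩
    (fun s _ => ⟨(hf s).1.prodMk (hf s).2, mem_univ _⟩)
    (fun s _ => ⟨by convert hasDerivAt_const s (0 : ℝ × ℝ) using 1; simp, mem_univ _⟩)
    (by simp [h₀, h₀'])
    (show t ∈ Ioo a b from ⟨by linarith [min_le_left t t₀], by linarith [le_max_left t t₀]⟩)
  exact congrArg Prod.fst hsol

lemma wronskian_ne_zero (hq : Continuous q) (hf : IsLinearODESol B q f f')
    (hg : IsLinearODESol B q g g')
    (hindep : ∀ c₁ c₂ : ℝ, (∀ t, c₁ * f t + c₂ * g t = 0) → c₁ = 0 ∧ c₂ = 0) :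
    wronskian f f' g g' 0 ≠ 0 := by
  intro hW
  obtain ⟨t₀, ht₀⟩ : ∃ t₀, g t₀ ≠ 0 := by
    by_contra! hg0
    simpa using hindep 0 1 (by simpa using hg0)
  have hW₀ : wronskian f f' g g' t₀ = 0 := by
    simpa [hW, (Real.exp_pos _).ne'] using hf.wronskian_mul_exp_eq hg t₀
  set c := f t₀ / g t₀
  have hη := (hf.add_const_mul hg (-c)).eq_zero hq (t₀ := t₀)
    (show f t₀ + -c * g t₀ = 0 by simp [c, div_mul_cancel₀ _ ht₀])
    (show f' t₀ + -c * g' t₀ = 0 by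
      rw [show f' t₀ + -c * g' t₀ = -wronskian f f' g g' t₀ / g t₀ by
        simp only [c, wronskian]; field_simp; ring, hW₀, neg_zero, zero_div])
  simpa using hindep 1 (-c) (fun t => by simpa using hη t)

lemma eq_zero_of_wronskian_eq_zero {h h' : ℝ → ℝ} (hf : IsLinearODESol B q f f')
    (hg : IsLinearODESol B q g g') (hh : IsLinearODESol B q h h')
    (hfg : wronskian f f' g g' 0 ≠ 0) (hhg : wronskian h h' g g' 0 = 0)
    (hfh : wronskian f f' h h' 0 = 0) (t : ℝ) : h t = 0 := by
  have hcramer : wronskian f f' g g' 0 * h t = 0 := by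
    linear_combination (-h t) * hf.wronskian_mul_exp_eq hg t
      + Real.exp (B * t) * wronskian_mul_eq f f' g g' h h' t
      + f t * hh.wronskian_mul_exp_eq hg t + g t * hf.wronskian_mul_exp_eq hh t
      + f t * hhg + g t * hfh
  simpa [hfg] using hcramer

end IsLinearODESol

noncomputable def radialLift (v : ℝ → ℝ) (t : ℝ) : ℝ := Real.exp t * v (Real.exp t)

noncomputable def radialLiftDeriv (v : ℝ → ℝ) (t : ℝ) : ℝ :=
  Real.exp t * v (Real.exp t) + Real.exp t ^ 2 * deriv v (Real.exp t)

lemma isLinearODESol_radialLift {d : ℝ} {W v : ℝ → ℝ} (hv : ContDiffOn ℝ 2 v (Ioi 0))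
    (heq : ∀ r > 0, deriv (deriv v) r + (d - 1) / r * deriv v r + W r * v r = 0) :
    IsLinearODESol (d - 4) (fun t => 3 - d + Real.exp t ^ 2 * W (Real.exp t))
      (radialLift v) (radialLiftDeriv v) := by
  have hv₁ : ∀ r > 0, HasDerivAt v (deriv v r) r := fun r hr =>
    ((hv.contDiffAt (Ioi_mem_nhds hr)).differentiableAt two_ne_zero).hasDerivAt
  have hv₂ : ∀ r > 0, HasDerivAt (deriv v) (deriv (deriv v) r) r := fun r hr =>
    (((hv.deriv_of_isOpen isOpen_Ioi (by norm_num)).contDiffAt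
      (Ioi_mem_nhds hr)).differentiableAt one_ne_zero).hasDerivAt
  intro t
  have he := Real.hasDerivAt_exp t
  have hr := Real.exp_pos t
  have hvt := (hv₁ _ hr).comp t he
  refine ⟨(he.mul hvt).congr_deriv (by simp only [radialLiftDeriv, Function.comp_apply]; ring), ?_⟩
  refine ((he.mul hvt).add ((he.pow 2).mul ((hv₂ _ hr).comp t he))).congr_deriv ?_
  simp only [radialLift, radialLiftDeriv, Function.comp_apply, Pi.pow_apply]
  -- `d/dt = r d/dr` with `r = eᵗ`: the `t`-equation is the radial one multiplied by `r³`.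
  linear_combination (norm := skip) Real.exp t ^ 3 * heq _ hr
  field_simp
  ring

lemma isLinearODESol_radialLift_of_linearized {d lam : ℝ} {Ψ v : ℝ → ℝ}
    (hv : ContDiffOn ℝ 2 v (Ioi 0))
    (heq : ∀ r > 0, deriv (deriv v) r + (d - 1) / r * deriv v r - r ^ 2 * v r + lam * v r
      + 3 * Ψ (Real.log r) ^ 2 / r ^ 2 * v r = 0) :
    IsLinearODESol (d - 4)
      (fun t => 3 - d + 3 * Ψ t ^ 2 + lam * Real.exp (2 * t) - Real.exp (4 * t))
      (radialLift v) (radialLiftDeriv v) := by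
  convert isLinearODESol_radialLift (d := d)
    (W := fun r => lam - r ^ 2 + 3 * Ψ (Real.log r) ^ 2 / r ^ 2)
    hv (fun r hr => by linear_combination heq r hr) using 1
  funext t
  have h2 : Real.exp (2 * t) = Real.exp t ^ 2 := by rw [← Real.exp_nat_mul]; norm_num
  have h4 : Real.exp (4 * t) = Real.exp t ^ 4 := by rw [← Real.exp_nat_mul]; norm_num
  simp only [Real.log_exp, h2, h4]
  field_simp
  ring

lemma sq_radialLift_add_sq_le (v : ℝ → ℝ) (t : ℝ) :
    radialLift v t ^ 2 + radialLiftDeriv v t ^ 2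
      ≤ 3 * (Real.exp t ^ 2 + Real.exp t ^ 4)
        * (v (Real.exp t) ^ 2 + deriv v (Real.exp t) ^ 2) := by
  simp only [radialLift, radialLiftDeriv]
  nlinarith [sq_nonneg (Real.exp t * deriv v (Real.exp t) - Real.exp t ^ 2 * v (Real.exp t)),
    sq_nonneg (Real.exp t * v (Real.exp t)), sq_nonneg (Real.exp t ^ 2 * deriv v (Real.exp t)),
    sq_nonneg (Real.exp t ^ 2 * v (Real.exp t)), sq_nonneg (Real.exp t * deriv v (Real.exp t))]

lemma exists_mul_lt_of_lintegral_lt_top {g : ℝ → ℝ} {s : Set ℝ} (hs : MeasurableSet s)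
    (hpos : s ⊆ Ioi 0) (hinv : ¬ IntegrableOn (·⁻¹) s)
    (hg : ∫⁻ r in s, ENNReal.ofReal (g r) < ⊤) {ε : ℝ} (hε : 0 < ε) :
    ∃ r ∈ s, r * g r < ε := by
  by_contra! hge
  have hle : ∀ r ∈ s, ε * r⁻¹ ≤ g r := fun r hr => by
    have hr0 : 0 < r := hpos hr
    rw [← div_eq_mul_inv, div_le_iff₀ hr0, mul_comm]
    exact hge r hr
  have hint : IntegrableOn (fun r => ε * r⁻¹) s := by
    refine ⟨(measurable_inv.const_mul ε).aestronglyMeasurable, ?_⟩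
    refine lt_of_le_of_lt (setLIntegral_mono' hs fun r hr => ?_) hg
    have hr0 : 0 < r := hpos hr
    rw [Real.enorm_of_nonneg (by positivity)]
    exact ENNReal.ofReal_le_ofReal (hle r hr)
  exact hinv (by simpa [hε.ne', IntegrableOn] using hint.const_mul ε⁻¹)

lemma frequently_atTop_exp_mul_lt {g : ℝ → ℝ}
    (hg : ∫⁻ r in Ioi 0, ENNReal.ofReal (g r) < ⊤) {ε : ℝ} (hε : 0 < ε) :
    ∃ᶠ t in atTop, Real.exp t * g (Real.exp t) < ε := by
  have hr : ∃ᶠ r in atTop, r * g r < ε := by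
    refine frequently_atTop.2 fun R => ?_
    obtain ⟨r, hr, hlt⟩ := exists_mul_lt_of_lintegral_lt_top (s := Ioi (max R 0))
      measurableSet_Ioi (Ioi_subset_Ioi (le_max_right R 0)) not_integrableOn_Ioi_inv
      ((lintegral_mono_set (Ioi_subset_Ioi (le_max_right R 0))).trans_lt hg) hε
    exact ⟨r, (le_max_left R 0).trans hr.le, hlt⟩
  refine Real.tendsto_log_atTop.frequently ((hr.and_eventually (eventually_gt_atTop 0)).mono ?_)
  rintro r ⟨hlt, hr⟩
  rwa [Real.exp_log hr]

lemma frequently_atBot_exp_mul_lt {g : ℝ → ℝ}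
    (hg : ∫⁻ r in Ioi 0, ENNReal.ofReal (g r) < ⊤) {ε : ℝ} (hε : 0 < ε) :
    ∃ᶠ t in atBot, Real.exp t * g (Real.exp t) < ε := by
  have hr : ∃ᶠ r in 𝓝[>] 0, r * g r < ε := by
    refine frequently_iff.2 fun hU => ?_
    obtain ⟨δ, hδ, hsub⟩ := mem_nhdsGT_iff_exists_Ioo_subset.1 hU
    have hinv : ¬ IntegrableOn (·⁻¹) (Ioo 0 δ) := by
      rw [← integrableOn_Ioc_iff_integrableOn_Ioo (by simp),
        ← intervalIntegrable_iff_integrableOn_Ioc_of_le (le_of_lt hδ), intervalIntegrable_inv_iff]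
      simp [(mem_Ioi.1 hδ).ne, left_mem_uIcc]
    obtain ⟨r, hr, hlt⟩ := exists_mul_lt_of_lintegral_lt_top measurableSet_Ioo
      (fun r hr => hr.1) hinv
      ((lintegral_mono_set Ioo_subset_Ioi_self).trans_lt hg) hε
    exact ⟨r, hsub hr, hlt⟩
  refine Real.tendsto_log_nhdsGT_zero.frequently
    ((hr.and_eventually self_mem_nhdsWithin).mono ?_)
  rintro r ⟨hlt, hr⟩
  rwa [Real.exp_log hr]

lemma sq_add_sq_mul_pow_le (n : ℕ) (x y : ℝ) {r : ℝ} (hr : 0 ≤ r) :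
    (x ^ 2 + y ^ 2) * r ^ (n + 4) ≤ r * ((x ^ 2 + y ^ 2 + r ^ 2 * x ^ 2) * r ^ (n + 3)) := by
  calc (x ^ 2 + y ^ 2) * r ^ (n + 4) = r * ((x ^ 2 + y ^ 2) * r ^ (n + 3)) := by ring
    _ ≤ r * ((x ^ 2 + y ^ 2) * r ^ (n + 3)) + r * (r ^ 2 * x ^ 2 * r ^ (n + 3)) :=
        le_add_of_nonneg_right (by positivity)
    _ = _ := by ring

lemma eq_zero_of_forall_sq_le_mul {c K : ℝ} (hK : 0 < K) (h : ∀ ε > 0, c ^ 2 ≤ K * ε) :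
    c = 0 := by
  refine pow_eq_zero_iff two_ne_zero |>.1 (le_antisymm ?_ (sq_nonneg c))
  refine le_of_forall_pos_le_add fun ε hε => ?_
  simpa [mul_div_cancel₀ _ hK.ne'] using h (ε / K) (by positivity)

lemma wronskian_radialLift_eq_zero_of_tendsto (n : ℕ) {v g g' : ℝ → ℝ} {c : ℝ}
    (hv : ∫⁻ r in Ioi 0,
      ENNReal.ofReal ((v r ^ 2 + deriv v r ^ 2 + r ^ 2 * v r ^ 2) * r ^ (n + 3)) < ⊤)
    (hg : Tendsto (fun t => g t * Real.exp ((n + 1) * t)) atTop (𝓝 0))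
    (hg' : Tendsto (fun t => g' t * Real.exp ((n + 1) * t)) atTop (𝓝 0))
    (hc : ∀ t, wronskian (radialLift v) (radialLiftDeriv v) g g' t * Real.exp (n * t) = c) :
    c = 0 := by
  simp only [← Nat.cast_add_one, Real.exp_nat_mul] at hg hg' hc
  have hg_small : ∀ᶠ t in atTop, 0 ≤ t ∧ (g t ^ 2 + g' t ^ 2) * Real.exp t ^ n ≤ 1 := by
    have hsq := (hg.pow 2).add (hg'.pow 2)
    filter_upwards [eventually_ge_atTop 0,
      hsq.eventually (ge_mem_nhds (by norm_num : (0 : ℝ) ^ 2 + 0 ^ 2 < 1))] with t ht hle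
    refine ⟨ht, le_trans ?_ hle⟩
    have hpow : Real.exp t ^ n ≤ Real.exp t ^ (2 * (n + 1)) :=
      pow_le_pow_right₀ (Real.one_le_exp ht) (by omega)
    calc (g t ^ 2 + g' t ^ 2) * Real.exp t ^ n
        ≤ (g t ^ 2 + g' t ^ 2) * Real.exp t ^ (2 * (n + 1)) := by gcongr
      _ = _ := by ring
  refine eq_zero_of_forall_sq_le_mul (K := 6) (by norm_num) fun ε hε => ?_
  obtain ⟨t, hu, ht, hS⟩ := ((frequently_atTop_exp_mul_lt hv hε).and_eventually hg_small).exists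
  replace hu := (sq_add_sq_mul_pow_le n _ _ (Real.exp_pos t).le).trans_lt hu
  have hr : Real.exp t ^ 2 ≤ Real.exp t ^ 4 := pow_le_pow_right₀ (Real.one_le_exp ht) (by norm_num)
  calc c ^ 2 = wronskian (radialLift v) (radialLiftDeriv v) g g' t ^ 2 * (Real.exp t ^ n) ^ 2 := by
        rw [← hc t]; ring
    _ ≤ 3 * (Real.exp t ^ 2 + Real.exp t ^ 4) * (v (Real.exp t) ^ 2 + deriv v (Real.exp t) ^ 2)
          * (g t ^ 2 + g' t ^ 2) * (Real.exp t ^ n) ^ 2 := by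
        gcongr
        exact (sq_wronskian_le _ _ _ _ t).trans (by gcongr; exact sq_radialLift_add_sq_le v t)
    _ ≤ 3 * (Real.exp t ^ 4 + Real.exp t ^ 4) * (v (Real.exp t) ^ 2 + deriv v (Real.exp t) ^ 2)
          * (g t ^ 2 + g' t ^ 2) * (Real.exp t ^ n) ^ 2 := by gcongr
    _ = 6 * ((v (Real.exp t) ^ 2 + deriv v (Real.exp t) ^ 2) * Real.exp t ^ (n + 4))
          * ((g t ^ 2 + g' t ^ 2) * Real.exp t ^ n) := by ring
    _ ≤ 6 * ε * 1 := by gcongr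
    _ = 6 * ε := mul_one _

lemma isBigO_exp_of_sub_isBigO {f : ℝ → ℝ}
    (hf : (fun t => f t - Real.exp t) =O[atBot] fun t => Real.exp (3 * t)) :
    f =O[atBot] Real.exp := by
  have h3 : (fun t => Real.exp (3 * t)) =O[atBot] Real.exp :=
    IsBigO.of_bound 1 <| by
      filter_upwards [eventually_le_atBot 0] with t ht
      simpa using Real.exp_le_exp.2 (by linarith)
  simpa using (hf.trans h3).add (isBigO_refl Real.exp atBot)

lemma wronskian_radialLift_eq_zero_of_isBigO (n : ℕ) {v f f' : ℝ → ℝ} {c : ℝ}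
    (hv : ∫⁻ r in Ioi 0,
      ENNReal.ofReal ((v r ^ 2 + deriv v r ^ 2 + r ^ 2 * v r ^ 2) * r ^ (n + 3)) < ⊤)
    (hf : f =O[atBot] Real.exp) (hf' : f' =O[atBot] Real.exp)
    (hc : ∀ t, wronskian f f' (radialLift v) (radialLiftDeriv v) t * Real.exp (n * t) = c) :
    c = 0 := by
  simp only [Real.exp_nat_mul] at hc
  obtain ⟨C₁, h₁⟩ := hf.bound
  obtain ⟨C₂, h₂⟩ := hf'.bound
  set K := C₁ ^ 2 + C₂ ^ 2 + 1
  have hf_small : ∀ᶠ t in atBot, t ≤ 0 ∧ f t ^ 2 + f' t ^ 2 ≤ K * Real.exp t ^ 2 := by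
    filter_upwards [eventually_le_atBot 0, h₁, h₂] with t ht h₁ h₂
    simp only [Real.norm_eq_abs, abs_of_pos (Real.exp_pos t)] at h₁ h₂
    refine ⟨ht, ?_⟩
    nlinarith [sq_abs (f t), sq_abs (f' t), abs_nonneg (f t), abs_nonneg (f' t),
      mul_self_le_mul_self (abs_nonneg _) h₁, mul_self_le_mul_self (abs_nonneg _) h₂,
      sq_nonneg (Real.exp t)]
  refine eq_zero_of_forall_sq_le_mul (K := 6 * K) (by positivity) fun ε hε => ?_
  obtain ⟨t, hu, ht, hS⟩ := ((frequently_atBot_exp_mul_lt hv hε).and_eventually hf_small).exists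
  replace hu := (sq_add_sq_mul_pow_le n _ _ (Real.exp_pos t).le).trans_lt hu
  have hr0 := Real.exp_pos t
  have hr1 : Real.exp t ≤ 1 := Real.exp_le_one_iff.2 ht
  have hr : Real.exp t ^ 4 ≤ Real.exp t ^ 2 := pow_le_pow_of_le_one hr0.le hr1 (by norm_num)
  have hrn : Real.exp t ^ n ≤ 1 := pow_le_one₀ hr0.le hr1
  calc c ^ 2 = wronskian f f' (radialLift v) (radialLiftDeriv v) t ^ 2 * (Real.exp t ^ n) ^ 2 := by
        rw [← hc t]; ring
    _ ≤ K * Real.exp t ^ 2 * (3 * (Real.exp t ^ 2 + Real.exp t ^ 4)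
          * (v (Real.exp t) ^ 2 + deriv v (Real.exp t) ^ 2)) * (Real.exp t ^ n) ^ 2 := by
        gcongr
        exact (sq_wronskian_le _ _ _ _ t).trans (by gcongr; exact sq_radialLift_add_sq_le v t)
    _ ≤ K * Real.exp t ^ 2 * (3 * (Real.exp t ^ 2 + Real.exp t ^ 2)
          * (v (Real.exp t) ^ 2 + deriv v (Real.exp t) ^ 2)) * (Real.exp t ^ n) ^ 2 := by gcongr
    _ = 6 * K * ((v (Real.exp t) ^ 2 + deriv v (Real.exp t) ^ 2) * Real.exp t ^ (n + 4))
          * Real.exp t ^ n := by ring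
    _ ≤ 6 * K * ε * 1 := by gcongr
    _ = 6 * K * ε := mul_one _

theorem stmt_8_general (d : ℤ) (hd : 4 ≤ d) (lam : ℝ)
    (Ψ γ₁ γ₂ : ℝ → ℝ)
    (hΨC : ContDiff ℝ 2 Ψ)
    (hγ₁C : ContDiff ℝ 2 γ₁) (hγ₂C : ContDiff ℝ 2 γ₂)
    (hγ₁eq : ∀ t : ℝ, deriv (deriv γ₁) t + ((d : ℝ) - 4) * deriv γ₁ t
      + (3 - (d : ℝ)) * γ₁ t + 3 * (Ψ t) ^ 2 * γ₁ t
      + lam * Real.exp (2 * t) * γ₁ t - Real.exp (4 * t) * γ₁ t = 0)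
    (hγ₂eq : ∀ t : ℝ, deriv (deriv γ₂) t + ((d : ℝ) - 4) * deriv γ₂ t
      + (3 - (d : ℝ)) * γ₂ t + 3 * (Ψ t) ^ 2 * γ₂ t
      + lam * Real.exp (2 * t) * γ₂ t - Real.exp (4 * t) * γ₂ t = 0)
    (hindep : ∀ c₁ c₂ : ℝ, (∀ t : ℝ, c₁ * γ₁ t + c₂ * γ₂ t = 0) → c₁ = 0 ∧ c₂ = 0)
    (hγ₁asym : (fun t : ℝ => γ₁ t - Real.exp t) =O[atBot] fun t : ℝ => Real.exp (3 * t))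
    (hγ₁'asym : (fun t : ℝ => deriv γ₁ t - Real.exp t)
      =O[atBot] fun t : ℝ => Real.exp (3 * t))
    (hγ₂dec : ∀ N > (0 : ℝ),
      Tendsto (fun t : ℝ => γ₂ t * Real.exp (N * t)) atTop (𝓝 0) ∧
      Tendsto (fun t : ℝ => deriv γ₂ t * Real.exp (N * t)) atTop (𝓝 0))
    (v : ℝ → ℝ) (hvC : ContDiffOn ℝ 2 v (Set.Ioi 0))
    (hveq : ∀ r > (0 : ℝ), deriv (deriv v) r + ((d : ℝ) - 1) / r * deriv v r
      - r ^ 2 * v r + lam * v r + 3 * (Ψ (Real.log r)) ^ 2 / r ^ 2 * v r = 0)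
    (hvint : ∫⁻ r in Set.Ioi (0 : ℝ),
        ENNReal.ofReal (((v r) ^ 2 + (deriv v r) ^ 2 + r ^ 2 * (v r) ^ 2) * r ^ (d - 1))
      < ⊤) :
    ∀ r > (0 : ℝ), v r = 0 := by
  obtain ⟨n, rfl⟩ : ∃ n : ℕ, d = n + 4 := ⟨(d - 4).toNat, by omega⟩
  have hn : ((n + 4 : ℤ) : ℝ) - 4 = n := by push_cast; ring
  set q : ℝ → ℝ := fun t =>
    3 - ((n + 4 : ℤ) : ℝ) + 3 * Ψ t ^ 2 + lam * Real.exp (2 * t) - Real.exp (4 * t)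
  have h₁ : IsLinearODESol n q γ₁ (deriv γ₁) :=
    hn ▸ .of_contDiff hγ₁C fun t => by linear_combination hγ₁eq t
  have h₂ : IsLinearODESol n q γ₂ (deriv γ₂) :=
    hn ▸ .of_contDiff hγ₂C fun t => by linear_combination hγ₂eq t
  have hγ : IsLinearODESol n q (radialLift v) (radialLiftDeriv v) :=
    hn ▸ isLinearODESol_radialLift_of_linearized hvC hveq
  have hE : ∫⁻ r in Ioi 0,
      ENNReal.ofReal ((v r ^ 2 + deriv v r ^ 2 + r ^ 2 * v r ^ 2) * r ^ (n + 3)) < ⊤ := by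
    simpa only [show ((n : ℤ) + 4 - 1) = ((n + 3 : ℕ) : ℤ) by push_cast; ring, zpow_natCast]
      using hvint
  have hγγ₂ := wronskian_radialLift_eq_zero_of_tendsto n hE (hγ₂dec (n + 1) (by positivity)).1
    (hγ₂dec (n + 1) (by positivity)).2 (hγ.wronskian_mul_exp_eq h₂)
  have hγ₁γ := wronskian_radialLift_eq_zero_of_isBigO n hE (isBigO_exp_of_sub_isBigO hγ₁asym)
    (isBigO_exp_of_sub_isBigO hγ₁'asym) (h₁.wronskian_mul_exp_eq hγ)
  have hq : Continuous q := by have := hΨC.continuous; fun_prop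
  intro r hr
  simpa [radialLift, Real.exp_log hr, hr.ne'] using
    h₁.eq_zero_of_wronskian_eq_zero h₂ hγ (h₁.wronskian_ne_zero hq h₂ hindep) hγγ₂ hγ₁γ
      (Real.log r)

/-- Key step in the proof of Theorem 1 (`theorem-main`): if the two canonical solutions
of the linearized Emden–Fowler equation (the one decaying like `e^t` at `-∞` and the one
decaying faster than any exponential at `+∞`) are linearly independent, then the only
solution `v` of `L v = 0` lying in the radial energy space is `v ≡ 0`. -/
theorem stmt_8 (d : ℤ) (hd : 4 ≤ d) (lam : ℝ)
    (Ψ γ₁ γ₂ : ℝ → ℝ)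
    (hΨC : ContDiff ℝ 2 Ψ)
    (hΨeq : ∀ t : ℝ, deriv (deriv Ψ) t + ((d : ℝ) - 4) * deriv Ψ t
      + (3 - (d : ℝ)) * Ψ t + (Ψ t) ^ 3
      = -lam * Real.exp (2 * t) * Ψ t + Real.exp (4 * t) * Ψ t)
    (hΨasym : Ψ =O[atBot] fun t : ℝ => Real.exp t)
    (hγ₁C : ContDiff ℝ 2 γ₁) (hγ₂C : ContDiff ℝ 2 γ₂)
    (hγ₁eq : ∀ t : ℝ, deriv (deriv γ₁) t + ((d : ℝ) - 4) * deriv γ₁ t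
      + (3 - (d : ℝ)) * γ₁ t + 3 * (Ψ t) ^ 2 * γ₁ t
      + lam * Real.exp (2 * t) * γ₁ t - Real.exp (4 * t) * γ₁ t = 0)
    (hγ₂eq : ∀ t : ℝ, deriv (deriv γ₂) t + ((d : ℝ) - 4) * deriv γ₂ t
      + (3 - (d : ℝ)) * γ₂ t + 3 * (Ψ t) ^ 2 * γ₂ t
      + lam * Real.exp (2 * t) * γ₂ t - Real.exp (4 * t) * γ₂ t = 0)
    (hindep : ∀ c₁ c₂ : ℝ, (∀ t : ℝ, c₁ * γ₁ t + c₂ * γ₂ t = 0) → c₁ = 0 ∧ c₂ = 0)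
    (hγ₁asym : (fun t : ℝ => γ₁ t - Real.exp t) =O[atBot] fun t : ℝ => Real.exp (3 * t))
    (hγ₁'asym : (fun t : ℝ => deriv γ₁ t - Real.exp t)
      =O[atBot] fun t : ℝ => Real.exp (3 * t))
    (hγ₂ne : ∃ t : ℝ, γ₂ t ≠ 0)
    (hγ₂dec : ∀ N > (0 : ℝ),
      Tendsto (fun t : ℝ => γ₂ t * Real.exp (N * t)) atTop (𝓝 0) ∧
      Tendsto (fun t : ℝ => deriv γ₂ t * Real.exp (N * t)) atTop (𝓝 0))
    (v : ℝ → ℝ) (hvC : ContDiffOn ℝ 2 v (Set.Ioi 0))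
    (hveq : ∀ r > (0 : ℝ), deriv (deriv v) r + ((d : ℝ) - 1) / r * deriv v r
      - r ^ 2 * v r + lam * v r + 3 * (Ψ (Real.log r)) ^ 2 / r ^ 2 * v r = 0)
    (hvint : ∫⁻ r in Set.Ioi (0 : ℝ),
        ENNReal.ofReal (((v r) ^ 2 + (deriv v r) ^ 2 + r ^ 2 * (v r) ^ 2) * r ^ (d - 1))
      < ⊤) :
    ∀ r > (0 : ℝ), v r = 0 :=
  stmt_8_general d hd lam Ψ γ₁ γ₂ hΨC hγ₁C hγ₂C hγ₁eq hγ₂eq hindep hγ₁asym hγ₁'asym hγ₂dec v hvC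
    hveq hvint
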